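/- Let A* be a saturated Dieudonné algebra. Then the map F₁ : W₁(A*) → (H*(A*/p), β) induced by F on the quotient W₁(A*) = A*/(VA* + dVA*) is an isomorphism of cochain complexes. -/

import Mathlib

/-!
Saturation says that `pⁿ F` is injective on `Aⁿ` and hits every `pⁿ y` with `d y ∈ p A`; as `A*`
is `p`-torsion free, `F` itself is injective and maps `A*` onto `{y : d y ∈ p A}`. So every mod-`p`
cocycle is `F x` on the nose, giving surjectivity. For injectivity, `F (V a) = p a` and
`F (d (V b)) = d b` show that `F (x - x') = p u + d v` forces `x - x' = V u + d (V v)`.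
-/

namespace Statement3

variable {A : ℕ → Type} [∀ n, AddCommGroup (A n)]

/-- `p`-th power in degree `0` of the graded multiplication. -/
def gradedPow0 (mul : ∀ i j, A i →+ A j →+ A (i + j)) (one : A 0) : A 0 → ℕ → A 0
  | _, 0 => one
  | x, (n + 1) => mul 0 0 x (gradedPow0 mul one x n)

/-- Equality in `W₁(A*) = A*/(V A* + d V A*)` in degree `i`. -/
def wOneEq (d : ∀ n, A n →+ A (n + 1)) (V : ∀ n, A n → A n) :
    ∀ i, A i → A i → Prop
  | 0, x, x' => ∃ a, x - x' = V 0 a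
  | (j + 1), x, x' => ∃ a b, x - x' = V (j + 1) a + d j (V j b)

/-- Equality in `H^i(A*/p)`: the difference lies in `p A^i + d A^{i-1}`. -/
def hModPEq (p : ℕ) (d : ∀ n, A n →+ A (n + 1)) : ∀ i, A i → A i → Prop
  | 0, x, x' => ∃ u, x - x' = (p : ℤ) • u
  | (j + 1), x, x' => ∃ u v, x - x' = (p : ℤ) • u + d j v

end Statement3

namespace Statement3

variable {A : ℕ → Type} [∀ n, AddCommGroup (A n)] {p : ℕ}
  {d : ∀ n, A n →+ A (n + 1)} {F : ∀ n, A n →+ A n} {V : ∀ n, A n → A n}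

theorem hModPEq_self : ∀ i (y : A i), hModPEq p d i y y
  | 0, _ => ⟨0, by simp⟩
  | _ + 1, _ => ⟨0, 0, by simp⟩

theorem frobenius_d_verschiebung {n : ℕ} (hreg : IsSMulRegular (A (n + 1)) (p : ℤ))
    (hdF : ∀ x : A n, d n (F n x) = (p : ℤ) • F (n + 1) (d n x))
    (hV : ∀ x : A n, F n (V n x) = (p : ℤ) • x) (x : A n) :
    F (n + 1) (d n (V n x)) = d n x :=
  hreg <| show (p : ℤ) • _ = (p : ℤ) • _ by rw [← hdF, hV, map_zsmul]

theorem wOneEq_of_hModPEq_frobenius (hFinj : ∀ n, Function.Injective (F n))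
    (hFdV : ∀ n (x : A n), F (n + 1) (d n (V n x)) = d n x)
    (hV : ∀ n (x : A n), F n (V n x) = (p : ℤ) • x) :
    ∀ i (x x' : A i), hModPEq p d i (F i x) (F i x') → wOneEq d V i x x'
  | 0, x, x', ⟨u, hu⟩ => ⟨u, hFinj 0 <| by rw [map_sub, hu, hV]⟩
  | j + 1, x, x', ⟨u, v, huv⟩ =>
    ⟨u, v, hFinj (j + 1) <| by rw [map_sub, huv, map_add, hV, hFdV]⟩

theorem exists_frobenius_eq {n : ℕ} (hreg : IsSMulRegular (A n) (p : ℤ))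
    (hsat : ∀ y : A n, (∃ z, y = (p : ℤ) ^ n • z) → (∃ w, d n y = (p : ℤ) ^ (n + 1) • w) →
      ∃ x, (p : ℤ) ^ n • F n x = y)
    {y : A n} {w : A (n + 1)} (hy : d n y = (p : ℤ) • w) : ∃ x, F n x = y := by
  obtain ⟨x, hx⟩ := hsat ((p : ℤ) ^ n • y) ⟨y, rfl⟩
    ⟨w, by rw [map_zsmul, hy, smul_smul, ← pow_succ]⟩
  exact ⟨x, hreg.pow n hx⟩

end Statement3

open Statement3 in
theorem statement3_general
    (p : ℕ) (A : ℕ → Type) [∀ n, AddCommGroup (A n)]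
    (d : ∀ n, A n →+ A (n + 1))
    (F : ∀ n, A n →+ A n)
    (hdF : ∀ n (x : A n), d n (F n x) = (p : ℤ) • F (n + 1) (d n x))
    (htf : ∀ n (x : A n), (p : ℤ) • x = 0 → x = 0)
    -- saturation: `φ_F = p^n • F` is a bijection onto `(η_p A)^n`
    (hsat : ∀ n, (Function.Injective fun x : A n => (p : ℤ) ^ n • F n x) ∧
      ∀ y : A n, (∃ z, y = (p : ℤ) ^ n • z) →
        (∃ w, d n y = (p : ℤ) ^ (n + 1) • w) →
        ∃ x, (p : ℤ) ^ n • F n x = y)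
    -- the Verschiebung
    (V : ∀ n, A n → A n)
    (hV : ∀ n (x : A n), F n (V n x) = (p : ℤ) • x) :
    ∀ i : ℕ,
      -- `F` of anything is a cocycle mod `p`, so `F₁` lands in `H^i(A*/p)`
      (∀ x : A i, ∃ w, d i (F i x) = (p : ℤ) • w) ∧
      -- `F₁` is injective
      (∀ x x' : A i, hModPEq p d i (F i x) (F i x') → wOneEq d V i x x') ∧
      -- `F₁` is surjective
      (∀ y : A i, (∃ w, d i y = (p : ℤ) • w) → ∃ x, hModPEq p d i (F i x) y) := by
  have hreg : ∀ n, IsSMulRegular (A n) (p : ℤ) := fun n => 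
    isSMulRegular_iff_right_eq_zero_of_smul.2 (htf n)
  have hFinj : ∀ n, Function.Injective (F n) := fun n =>
    Function.Injective.of_comp (f := fun y => (p : ℤ) ^ n • y) (hsat n).1
  have hFdV := fun n => frobenius_d_verschiebung (hreg (n + 1)) (hdF n) (hV n)
  refine fun i => ⟨fun x => ⟨F (i + 1) (d i x), hdF i x⟩,
    wOneEq_of_hModPEq_frobenius hFinj hFdV hV i, ?_⟩
  rintro y ⟨w, hw⟩
  obtain ⟨x, rfl⟩ := exists_frobenius_eq (hreg i) (hsat i).2 hw
  exact ⟨x, hModPEq_self i _⟩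

open Statement3 in
/-- Let `A*` be a saturated Dieudonné algebra with Verschiebung `V`
(the unique operator with `F (V x) = p x`).  Then the map
`F₁ : W₁(A*) = A*/(V A* + d V A*) → (H^*(A*/p), β)` induced by `F` is an
isomorphism of cochain complexes, stated here on representatives:
`F` lands in mod-`p` cocycles, and `F₁` is injective and surjective in every degree. -/
theorem statement3
    (p : ℕ) (hp : p.Prime)
    (A : ℕ → Type) [∀ n, AddCommGroup (A n)]
    (d : ∀ n, A n →+ A (n + 1))
    (hdd : ∀ n (x : A n), d (n + 1) (d n x) = 0)
    (F : ∀ n, A n →+ A n)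
    (one : A 0)
    (mul : ∀ i j, A i →+ A j →+ A (i + j))
    (hFmul : ∀ i j (x : A i) (y : A j),
      F (i + j) (mul i j x y) = mul i j (F i x) (F j y))
    (hFone : F 0 one = one)
    (hFp : ∀ x : A 0, ∃ y, F 0 x = gradedPow0 mul one x p + (p : ℤ) • y)
    (hdF : ∀ n (x : A n), d n (F n x) = (p : ℤ) • F (n + 1) (d n x))
    (htf : ∀ n (x : A n), (p : ℤ) • x = 0 → x = 0)
    -- saturation: `φ_F = p^n • F` is a bijection onto `(η_p A)^n`
    (hsat : ∀ n, (Function.Injective fun x : A n => (p : ℤ) ^ n • F n x) ∧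
      ∀ y : A n, (∃ z, y = (p : ℤ) ^ n • z) →
        (∃ w, d n y = (p : ℤ) ^ (n + 1) • w) →
        ∃ x, (p : ℤ) ^ n • F n x = y)
    -- the Verschiebung
    (V : ∀ n, A n → A n)
    (hV : ∀ n (x : A n), F n (V n x) = (p : ℤ) • x) :
    ∀ i : ℕ,
      -- `F` of anything is a cocycle mod `p`, so `F₁` lands in `H^i(A*/p)`
      (∀ x : A i, ∃ w, d i (F i x) = (p : ℤ) • w) ∧
      -- `F₁` is injective
      (∀ x x' : A i, hModPEq p d i (F i x) (F i x') → wOneEq d V i x x') ∧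
      -- `F₁` is surjective
      (∀ y : A i, (∃ w, d i y = (p : ℤ) • w) → ∃ x, hModPEq p d i (F i x) y) :=
  statement3_general p A d F hdF htf hsat V hV
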